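/- For p ∈ [0,1], let 𝒵 = {|0⟩⟨0|, |1⟩⟨1|} and 𝒲^p = {|0⟩⟨0| + p|1⟩⟨1|, (1−p)|1⟩⟨1|} be two-outcome qubit POVMs. Let S_M(p) be the supremum, over two-outcome testers (T₁, T₂) on ℂ²⊗ℂ², of (1/2)Tr(C^M_𝒵 T₁) + (1/2)Tr(C^M_{𝒲^p} T₂), where C^M denotes the measure-and-prepare Choi operator; and let S_L(p) be the supremum, over two-outcome testers (T₁, T₂) on ℂ²⊗(ℂ²⊗ℂ²), of (1/2)Tr(C^L_𝒵 T₁) + (1/2)Tr(C^L_{𝒲^p} T₂), where C^L denotes the Lüders-instrument Choi operator. Then for every real L > 0 there exists p ∈ (0,1) such that S_L(p) − 1/2 > L · (S_M(p) − 1/2). That is, the instrument advantage bias can be arbitrarily large, even for qubit measurements. -/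

import Mathlib

open Matrix Kronecker
open scoped ComplexOrder Classical

noncomputable section

set_option linter.unusedSectionVars false
set_option maxHeartbeats 1000000

/-- Projection onto the `a`-th computational basis vector. -/
def outm {n : ℕ} (a : Fin n) : Matrix (Fin n) (Fin n) ℂ :=
  Matrix.single a a 1

/-- The unnormalized maximally entangled vector `|φ⁺_d⟩ = Σ_j e_j ⊗ e_j` in `ℂ^d ⊗ ℂ^d`. -/
def phiPlus (d : ℕ) : Fin d × Fin d → ℂ :=
  fun jj => if jj.1 = jj.2 then 1 else 0

/-- The positive semidefinite square root of a positive semidefinite matrix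
(junk value `0` on non-PSD matrices). -/
def psqrt {d : Type} [Fintype d] [DecidableEq d] (M : Matrix d d ℂ) : Matrix d d ℂ :=
  if h : M.PosSemidef then
    (h.1.eigenvectorUnitary : Matrix d d ℂ) *
      Matrix.diagonal (fun i => ((Real.sqrt (h.1.eigenvalues i) : ℝ) : ℂ)) *
      (star (h.1.eigenvectorUnitary : Matrix d d ℂ))
  else 0

/-- A two-outcome tester on `ℂ^{dIn} ⊗ ℂ^{dOut}`. -/
def IsTester {dIn dOut : Type} [Fintype dIn] [Fintype dOut] [DecidableEq dIn] [DecidableEq dOut]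
    (T₁ T₂ : Matrix (dIn × dOut) (dIn × dOut) ℂ) : Prop :=
  T₁.PosSemidef ∧ T₂.PosSemidef ∧
    ∃ σ : Matrix dIn dIn ℂ, σ.PosSemidef ∧ σ.trace = 1 ∧
      T₁ + T₂ = σ ⊗ₖ (1 : Matrix dOut dOut ℂ)

/-- Choi operator of the measure-and-prepare channel of the two-outcome qubit POVM `M`. -/
def mpChoi (M : Fin 2 → Matrix (Fin 2) (Fin 2) ℂ) :
    Matrix (Fin 2 × Fin 2) (Fin 2 × Fin 2) ℂ :=
  ∑ a, (M a)ᵀ ⊗ₖ outm a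

/-- Choi operator of the Lüders instrument of the two-outcome qubit POVM `M`. -/
def ludersChoi (M : Fin 2 → Matrix (Fin 2) (Fin 2) ℂ) :
    Matrix (Fin 2 × Fin 2 × Fin 2) (Fin 2 × Fin 2 × Fin 2) ℂ :=
  ∑ a, Matrix.reindex (Equiv.prodAssoc (Fin 2) (Fin 2) (Fin 2))
      (Equiv.prodAssoc (Fin 2) (Fin 2) (Fin 2))
    ((((1 : Matrix (Fin 2) (Fin 2) ℂ) ⊗ₖ psqrt (M a)) *
        Matrix.vecMulVec (phiPlus 2) (star (phiPlus 2)) *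
        ((1 : Matrix (Fin 2) (Fin 2) ℂ) ⊗ₖ psqrt (M a))) ⊗ₖ outm a)

/-- The qubit POVM `𝒵 = {|0⟩⟨0|, |1⟩⟨1|}`. -/
def Zpovm : Fin 2 → Matrix (Fin 2) (Fin 2) ℂ :=
  ![outm 0, outm 1]

/-- The qubit POVM `𝒲^p = {|0⟩⟨0| + p|1⟩⟨1|, (1-p)|1⟩⟨1|}`. -/
def Wpovm (p : ℝ) : Fin 2 → Matrix (Fin 2) (Fin 2) ℂ :=
  ![outm 0 + (p : ℂ) • outm 1, (1 - (p : ℂ)) • outm 1]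

/-- The optimal equal-prior success probability of discriminating `𝒵` and `𝒲^p`
without access to the post-measurement state. -/
def SM (p : ℝ) : ℝ :=
  sSup {r : ℝ | ∃ T₁ T₂ : Matrix (Fin 2 × Fin 2) (Fin 2 × Fin 2) ℂ,
    IsTester T₁ T₂ ∧
    r = (1 / 2) * ((mpChoi Zpovm * T₁).trace).re +
        (1 / 2) * ((mpChoi (Wpovm p) * T₂).trace).re}

/-- The optimal equal-prior success probability of discriminating the Lüders instruments
of `𝒵` and `𝒲^p`. -/
def SL (p : ℝ) : ℝ :=
  sSup {r : ℝ | ∃ T₁ T₂ : Matrix (Fin 2 × Fin 2 × Fin 2) (Fin 2 × Fin 2 × Fin 2) ℂ,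
    IsTester T₁ T₂ ∧
    r = (1 / 2) * ((ludersChoi Zpovm * T₁).trace).re +
        (1 / 2) * ((ludersChoi (Wpovm p) * T₂).trace).re}

/-! ### Auxiliary positivity lemmas -/

lemma diag_nonneg' {n : Type} [Fintype n] [DecidableEq n]
    {M : Matrix n n ℂ} (hM : M.PosSemidef) (i : n) : 0 ≤ M i i := by
  exact hM.diag_nonneg

lemma trace_nonneg' {n : Type} [Fintype n] [DecidableEq n]
    {M : Matrix n n ℂ} (hM : M.PosSemidef) : 0 ≤ M.trace :=
  Finset.sum_nonneg fun i _ => diag_nonneg' hM i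

open scoped MatrixOrder in
lemma trace_mul_nonneg' {n : Type} [Fintype n] [DecidableEq n]
    {A B : Matrix n n ℂ} (hA : A.PosSemidef) (hB : B.PosSemidef) :
    0 ≤ (A * B).trace := by
  obtain ⟨C, rfl⟩ := CStarAlgebra.nonneg_iff_eq_star_mul_self.mp hB.nonneg
  rw [← Matrix.mul_assoc, Matrix.trace_mul_cycle]
  exact trace_nonneg' (hA.mul_mul_conjTranspose_same C)

lemma re_nonneg_of_nonneg {z : ℂ} (h : 0 ≤ z) : 0 ≤ z.re := by
  rw [Complex.le_def] at h
  simpa using h.1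

lemma re_le_re_of_le {z w : ℂ} (h : z ≤ w) : z.re ≤ w.re := by
  rw [Complex.le_def] at h
  exact h.1

lemma psd_vecMulVec {n : Type} [Fintype n] [DecidableEq n] (v : n → ℂ) :
    (Matrix.vecMulVec v (star v)).PosSemidef :=
  Matrix.posSemidef_vecMulVec_self_star v

lemma conjTranspose_kron {n m : Type} [Fintype n] [DecidableEq n] [Fintype m] [DecidableEq m]
    (A : Matrix n n ℂ) (B : Matrix m m ℂ) : (A ⊗ₖ B)ᴴ = Aᴴ ⊗ₖ Bᴴ := by
  ext ⟨i,k⟩ ⟨j,l⟩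
  simp [Matrix.conjTranspose_apply, Matrix.kroneckerMap_apply]

lemma psd_kron {n m : Type} [Fintype n] [DecidableEq n] [Fintype m] [DecidableEq m]
    {A : Matrix n n ℂ} {B : Matrix m m ℂ} (hA : A.PosSemidef) (hB : B.PosSemidef) :
    (A ⊗ₖ B).PosSemidef := by
  exact hA.kronecker hB

lemma psd_smul' {n : Type} [Fintype n] [DecidableEq n]
    {M : Matrix n n ℂ} (hM : M.PosSemidef) {c : ℝ} (hc : 0 ≤ c) :
    (((c : ℂ)) • M).PosSemidef := by
  exact hM.smul (by exact_mod_cast hc)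

/-! ### Diagonal 2×2 matrices -/

def dg (c : Fin 2 → ℝ) : Matrix (Fin 2) (Fin 2) ℂ :=
  Matrix.diagonal fun i => (c i : ℂ)

lemma dg_apply (c : Fin 2 → ℝ) (i j : Fin 2) :
    dg c i j = if i = j then (c i : ℂ) else 0 := by
  simp [dg, Matrix.diagonal_apply]

lemma outm0 : outm (0 : Fin 2) = dg ![1,0] := by
  ext i j
  fin_cases i <;> fin_cases j <;> simp [outm, dg, Matrix.single_apply, Matrix.diagonal]

lemma outm1 : outm (1 : Fin 2) = dg ![0,1] := by
  ext i j
  fin_cases i <;> fin_cases j <;> simp [outm, dg, Matrix.single_apply, Matrix.diagonal]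

lemma W0_eq (p : ℝ) : Wpovm p 0 = dg ![1,p] := by
  rw [show Wpovm p 0 = outm 0 + (p:ℂ) • outm 1 from rfl, outm0, outm1]
  ext i j
  fin_cases i <;> fin_cases j <;> simp [dg, Matrix.diagonal]

lemma W1_eq (p : ℝ) : Wpovm p 1 = dg ![0,1-p] := by
  rw [show Wpovm p 1 = (1 - (p:ℂ)) • outm 1 from rfl, outm1]
  ext i j
  fin_cases i <;> fin_cases j <;> simp [dg, Matrix.diagonal]

lemma dg_transpose (c : Fin 2 → ℝ) : (dg c)ᵀ = dg c := Matrix.diagonal_transpose _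

lemma psd_outm {n : ℕ} (a : Fin n) : (outm a).PosSemidef := by
  have h : outm a = Matrix.diagonal (fun i => if i = a then (1:ℂ) else 0) := by
    ext i j
    by_cases h1 : i = a <;> by_cases h2 : j = a <;>
      simp [outm, Matrix.single_apply, Matrix.diagonal_apply, h1, h2] <;> aesop
  rw [h]
  exact Matrix.posSemidef_diagonal_iff.mpr fun i => by positivity

lemma psd_dg {c : Fin 2 → ℝ} (hc : ∀ i, 0 ≤ c i) : (dg c).PosSemidef :=
  Matrix.posSemidef_diagonal_iff.mpr fun i => by exact_mod_cast hc i

open scoped MatrixOrder in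
lemma psqrt_dg {c d : Fin 2 → ℝ} (hc : ∀ i, 0 ≤ c i) (hd : ∀ i, 0 ≤ d i)
    (h : ∀ i, d i ^ 2 = c i) : psqrt (dg c) = dg d := by
  have hpsd := psd_dg hc
  have e : psqrt (dg c) = CFC.sqrt (dg c) := by
    rw [CFC.sqrt_eq_cfc, cfc_nnreal_eq_real _ _ (Matrix.nonneg_iff_posSemidef.mpr hpsd),
      hpsd.1.cfc_eq, Matrix.IsHermitian.cfc, Unitary.conjStarAlgAut_apply, psqrt, dif_pos hpsd]
    congr 2
    congr 1
    funext i
    rw [Function.comp_apply, Function.comp_apply, Real.coe_sqrt,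
      Real.coe_toNNReal _ (hpsd.eigenvalues_nonneg i)]
    rfl
  rw [e, CFC.sqrt_eq_iff _ _ (Matrix.nonneg_iff_posSemidef.mpr hpsd)
    (Matrix.nonneg_iff_posSemidef.mpr (psd_dg hd))]
  rw [dg, dg, Matrix.diagonal_mul_diagonal]
  refine congrArg Matrix.diagonal (funext fun i => ?_)
  rw [← h i]
  push_cast
  ring

lemma psqrt_Z0 : psqrt (Zpovm 0) = dg ![1,0] := by
  rw [show Zpovm 0 = outm 0 from rfl, outm0]
  refine psqrt_dg ?_ ?_ ?_ <;> intro i <;> fin_cases i <;> norm_num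

lemma psqrt_Z1 : psqrt (Zpovm 1) = dg ![0,1] := by
  rw [show Zpovm 1 = outm 1 from rfl, outm1]
  refine psqrt_dg ?_ ?_ ?_ <;> intro i <;> fin_cases i <;> norm_num

lemma psqrt_W0 {p : ℝ} (hp : 0 ≤ p) : psqrt (Wpovm p 0) = dg ![1, Real.sqrt p] := by
  rw [W0_eq]
  refine psqrt_dg ?_ ?_ ?_ <;> intro i <;> fin_cases i <;>
    simp [hp, Real.sqrt_nonneg, Real.sq_sqrt]

lemma psqrt_W1 {p : ℝ} (hp : p ≤ 1) : psqrt (Wpovm p 1) = dg ![0, Real.sqrt (1-p)] := by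
  rw [W1_eq]
  have h1p : (0:ℝ) ≤ 1 - p := by linarith
  refine psqrt_dg ?_ ?_ ?_ <;> intro i <;> fin_cases i <;>
    simp [h1p, Real.sqrt_nonneg, Real.sq_sqrt]

/-! ### Structure of the Lüders Choi matrix -/

def wv (c : Fin 2 → ℝ) : Fin 2 × Fin 2 → ℂ := fun ik => if ik.1 = ik.2 then (c ik.1 : ℂ) else 0

abbrev ea := Equiv.prodAssoc (Fin 2) (Fin 2) (Fin 2)

lemma Qform (c : Fin 2 → ℝ) :
    ((1 : Matrix (Fin 2) (Fin 2) ℂ) ⊗ₖ dg c) * Matrix.vecMulVec (phiPlus 2) (star (phiPlus 2)) *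
      ((1 : Matrix (Fin 2) (Fin 2) ℂ) ⊗ₖ dg c) =
    Matrix.vecMulVec (wv c) (star (wv c)) := by
  ext ⟨i,k⟩ ⟨j,l⟩
  simp only [Matrix.mul_apply, Fintype.sum_prod_type, phiPlus, Matrix.vecMulVec_apply,
    Matrix.kroneckerMap_apply, Matrix.one_apply, dg, Matrix.diagonal_apply, wv,
    Fin.sum_univ_two, Pi.star_apply]
  fin_cases i <;> fin_cases k <;> fin_cases j <;> fin_cases l <;> simp

lemma luders_eq (M : Fin 2 → Matrix (Fin 2) (Fin 2) ℂ) (c₀ c₁ : Fin 2 → ℝ)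
    (h0 : psqrt (M 0) = dg c₀) (h1 : psqrt (M 1) = dg c₁) :
    ludersChoi M =
      Matrix.reindex ea ea (Matrix.vecMulVec (wv c₀) (star (wv c₀)) ⊗ₖ outm 0)
      + Matrix.reindex ea ea (Matrix.vecMulVec (wv c₁) (star (wv c₁)) ⊗ₖ outm 1) := by
  rw [ludersChoi, Fin.sum_univ_two, h0, h1, Qform, Qform]

lemma psd_luders (M : Fin 2 → Matrix (Fin 2) (Fin 2) ℂ) (c₀ c₁ : Fin 2 → ℝ)
    (h0 : psqrt (M 0) = dg c₀) (h1 : psqrt (M 1) = dg c₁) :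
    (ludersChoi M).PosSemidef := by
  rw [luders_eq M c₀ c₁ h0 h1]
  have hpsd : ∀ (c : Fin 2 → ℝ) (a : Fin 2),
      (Matrix.reindex ea ea (Matrix.vecMulVec (wv c) (star (wv c)) ⊗ₖ outm a)).PosSemidef := by
    intro c a
    rw [Matrix.reindex_apply]
    refine Matrix.PosSemidef.submatrix ?_ _
    exact psd_kron (psd_vecMulVec _) (psd_outm a)
  exact (hpsd c₀ 0).add (hpsd c₁ 1)

/-! ### Trace computations -/

lemma trace_reindex' {m n : Type} [Fintype m] [Fintype n] (e : m ≃ n) (M : Matrix m m ℂ) :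
    (Matrix.reindex e e M).trace = M.trace := by
  simp only [Matrix.trace, Matrix.reindex_apply, Matrix.submatrix_apply, Matrix.diag]
  exact Fintype.sum_equiv e.symm _ _ fun i => rfl

lemma trQ (c : Fin 2 → ℝ) (σ F : Matrix (Fin 2) (Fin 2) ℂ) :
    (Matrix.vecMulVec (wv c) (star (wv c)) * (σ ⊗ₖ F)).trace
    = ∑ i, ∑ j, (c i : ℂ) * c j * σ i j * F i j := by
  simp only [Matrix.trace, Matrix.diag, Matrix.mul_apply, Fintype.sum_prod_type,
    Matrix.vecMulVec_apply, wv, Matrix.kroneckerMap_apply, Fin.sum_univ_two, Pi.star_apply]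
  simp
  ring

lemma tr_outm_mul (a : Fin 2) (G : Matrix (Fin 2) (Fin 2) ℂ) :
    (outm a * G).trace = G a a := by
  fin_cases a <;>
    simp [Matrix.trace, Matrix.diag, Matrix.mul_apply, outm, Matrix.single_apply,
      Fin.sum_univ_two]

lemma key_trace (c : Fin 2 → ℝ) (a : Fin 2) (σ F G : Matrix (Fin 2) (Fin 2) ℂ) :
    (Matrix.reindex ea ea (Matrix.vecMulVec (wv c) (star (wv c)) ⊗ₖ outm a) *
      (σ ⊗ₖ (F ⊗ₖ G))).trace
    = (∑ i, ∑ j, (c i : ℂ) * c j * σ i j * F i j) * G a a := by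
  rw [← Matrix.kronecker_assoc σ F G]
  rw [Matrix.reindex_apply, Matrix.reindex_apply, Matrix.submatrix_mul_equiv]
  rw [show ((Matrix.vecMulVec (wv c) (star (wv c)) ⊗ₖ outm a) * (σ ⊗ₖ F ⊗ₖ G)) =
    ((Matrix.vecMulVec (wv c) (star (wv c)) * (σ ⊗ₖ F)) ⊗ₖ (outm a * G)) from
    (Matrix.mul_kronecker_mul _ _ _ _).symm]
  rw [← Matrix.reindex_apply, trace_reindex', Matrix.trace_kronecker, trQ, tr_outm_mul]

lemma trLZ (σ F G : Matrix (Fin 2) (Fin 2) ℂ) :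
    (ludersChoi Zpovm * (σ ⊗ₖ (F ⊗ₖ G))).trace
    = σ 0 0 * F 0 0 * G 0 0 + σ 1 1 * F 1 1 * G 1 1 := by
  rw [luders_eq Zpovm ![1,0] ![0,1] psqrt_Z0 psqrt_Z1, Matrix.add_mul, Matrix.trace_add,
    key_trace, key_trace]
  simp [Fin.sum_univ_two]

lemma trLW {p : ℝ} (hp0 : 0 ≤ p) (hp1 : p ≤ 1) (σ F G : Matrix (Fin 2) (Fin 2) ℂ) :
    (ludersChoi (Wpovm p) * (σ ⊗ₖ (F ⊗ₖ G))).trace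
    = (σ 0 0 * F 0 0
        + (Real.sqrt p : ℂ) * (σ 0 1 * F 0 1 + σ 1 0 * F 1 0)
        + (Real.sqrt p : ℂ) * (Real.sqrt p : ℂ) * (σ 1 1 * F 1 1)) * G 0 0
      + (Real.sqrt (1-p) : ℂ) * (Real.sqrt (1-p) : ℂ) * (σ 1 1 * F 1 1) * G 1 1 := by
  rw [luders_eq (Wpovm p) ![1, Real.sqrt p] ![0, Real.sqrt (1-p)] (psqrt_W0 hp0) (psqrt_W1 hp1),
    Matrix.add_mul, Matrix.trace_add, key_trace, key_trace]
  simp [Fin.sum_univ_two]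
  ring

/-! ### measure-and-prepare Choi computations -/

lemma tr_dg_mul (c : Fin 2 → ℝ) (σ : Matrix (Fin 2) (Fin 2) ℂ) :
    (dg c * σ).trace = (c 0 : ℂ) * σ 0 0 + (c 1 : ℂ) * σ 1 1 := by
  simp [Matrix.trace, Matrix.diag, Matrix.mul_apply, dg, Matrix.diagonal_apply,
    Fin.sum_univ_two]

lemma mp_eq (M : Fin 2 → Matrix (Fin 2) (Fin 2) ℂ) (c₀ c₁ : Fin 2 → ℝ)
    (h0 : M 0 = dg c₀) (h1 : M 1 = dg c₁) :
    mpChoi M = dg c₀ ⊗ₖ outm 0 + dg c₁ ⊗ₖ outm 1 := by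
  rw [mpChoi, Fin.sum_univ_two, h0, h1, dg_transpose, dg_transpose]

lemma tr_mp_kron (c₀ c₁ : Fin 2 → ℝ) (σ F : Matrix (Fin 2) (Fin 2) ℂ) :
    ((dg c₀ ⊗ₖ outm 0 + dg c₁ ⊗ₖ outm 1) * (σ ⊗ₖ F)).trace
    = ((c₀ 0 : ℂ) * σ 0 0 + (c₀ 1 : ℂ) * σ 1 1) * F 0 0
      + ((c₁ 0 : ℂ) * σ 0 0 + (c₁ 1 : ℂ) * σ 1 1) * F 1 1 := by
  rw [Matrix.add_mul, Matrix.trace_add, ← Matrix.mul_kronecker_mul, ← Matrix.mul_kronecker_mul,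
    Matrix.trace_kronecker, Matrix.trace_kronecker, tr_dg_mul, tr_dg_mul, tr_outm_mul,
    tr_outm_mul]

lemma mpZ_eq : mpChoi Zpovm = dg ![1,0] ⊗ₖ outm 0 + dg ![0,1] ⊗ₖ outm 1 :=
  mp_eq _ _ _ (by rw [show Zpovm 0 = outm 0 from rfl, outm0])
    (by rw [show Zpovm 1 = outm 1 from rfl, outm1])

lemma mpW_eq (p : ℝ) :
    mpChoi (Wpovm p) = dg ![1,p] ⊗ₖ outm 0 + dg ![0,1-p] ⊗ₖ outm 1 :=
  mp_eq _ _ _ (W0_eq p) (W1_eq p)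

lemma mp_diff (p : ℝ) :
    mpChoi Zpovm - mpChoi (Wpovm p)
    = (p : ℂ) • (dg ![0,1] ⊗ₖ dg ![0,1]) - (p : ℂ) • (dg ![0,1] ⊗ₖ dg ![1,0]) := by
  rw [mpZ_eq, mpW_eq, outm0, outm1]
  ext ⟨i,k⟩ ⟨j,l⟩
  fin_cases i <;> fin_cases k <;> fin_cases j <;> fin_cases l <;>
    (simp [dg_apply, Matrix.kroneckerMap_apply]; try push_cast) <;> try ring

lemma SM_le {p : ℝ} (hp0 : 0 ≤ p) (hp1 : p ≤ 1) : SM p ≤ 1/2 + p/2 := by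
  apply Real.sSup_le
  · rintro r ⟨T₁, T₂, ⟨hT1, hT2, σ, hσ, hσtr, hsum⟩, rfl⟩
    have hT2eq : T₂ = σ ⊗ₖ (1 : Matrix (Fin 2) (Fin 2) ℂ) - T₁ := by
      rw [← hsum]; exact (add_sub_cancel_left _ _).symm
    -- trace of C_W against σ ⊗ 1 is 1
    have hWσ : (mpChoi (Wpovm p) * (σ ⊗ₖ (1 : Matrix (Fin 2) (Fin 2) ℂ))).trace = 1 := by
      rw [mpW_eq, tr_mp_kron]
      have h00 : (1 : Matrix (Fin 2) (Fin 2) ℂ) 0 0 = 1 := by simp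
      have h11 : (1 : Matrix (Fin 2) (Fin 2) ℂ) 1 1 = 1 := by simp
      rw [h00, h11]
      have htr : σ 0 0 + σ 1 1 = 1 := by rw [← Matrix.trace_fin_two]; exact hσtr
      simp only [Matrix.cons_val_zero, Matrix.cons_val_one, Matrix.head_cons]
      push_cast
      linear_combination htr
    have hW2 : (mpChoi (Wpovm p) * T₂).trace = 1 - (mpChoi (Wpovm p) * T₁).trace := by
      rw [hT2eq, Matrix.mul_sub, Matrix.trace_sub, hWσ]
    -- the difference term
    set P₁ : Matrix (Fin 2 × Fin 2) (Fin 2 × Fin 2) ℂ := dg ![0,1] ⊗ₖ dg ![0,1] with hP₁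
    set P₀ : Matrix (Fin 2 × Fin 2) (Fin 2 × Fin 2) ℂ := dg ![0,1] ⊗ₖ dg ![1,0] with hP₀
    have hdiff : (mpChoi Zpovm * T₁).trace - (mpChoi (Wpovm p) * T₁).trace
        = (p : ℂ) * (P₁ * T₁).trace - (p : ℂ) * (P₀ * T₁).trace := by
      rw [← Matrix.trace_sub, ← Matrix.sub_mul, mp_diff p, Matrix.sub_mul,
        Matrix.smul_mul, Matrix.smul_mul, Matrix.trace_sub, Matrix.trace_smul,
        Matrix.trace_smul, smul_eq_mul, smul_eq_mul]
    have hpsd1 : P₁.PosSemidef := psd_kron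
      (psd_dg (by intro i; fin_cases i <;> norm_num))
      (psd_dg (by intro i; fin_cases i <;> norm_num))
    have hpsd0 : P₀.PosSemidef := psd_kron
      (psd_dg (by intro i; fin_cases i <;> norm_num))
      (psd_dg (by intro i; fin_cases i <;> norm_num))
    have hB : 0 ≤ ((P₀ * T₁).trace).re := re_nonneg_of_nonneg (trace_mul_nonneg' hpsd0 hT1)
    have hA : ((P₁ * T₁).trace).re ≤ 1 := by
      have hgroup : (P₁ * T₁).trace + (P₁ * T₂).trace = (P₁ * (σ ⊗ₖ 1)).trace := by
        rw [← Matrix.trace_add, ← Matrix.mul_add, hsum]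
      have hval : (P₁ * (σ ⊗ₖ (1 : Matrix (Fin 2) (Fin 2) ℂ))).trace = σ 1 1 := by
        rw [hP₁, ← Matrix.mul_kronecker_mul, Matrix.trace_kronecker, tr_dg_mul, tr_dg_mul]
        simp
      have h2 : 0 ≤ ((P₁ * T₂).trace).re := re_nonneg_of_nonneg (trace_mul_nonneg' hpsd1 hT2)
      have hσ11 : (σ 1 1).re ≤ 1 := by
        have h00 : 0 ≤ (σ 0 0).re := re_nonneg_of_nonneg (diag_nonneg' hσ 0)
        have htr : σ 0 0 + σ 1 1 = 1 := by rw [← Matrix.trace_fin_two]; exact hσtr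
        have := congrArg Complex.re htr
        simp only [Complex.add_re, Complex.one_re] at this
        linarith
      have := congrArg Complex.re (hgroup.trans hval)
      simp only [Complex.add_re] at this
      linarith
    -- assemble
    rw [hW2]
    have hre : ((mpChoi Zpovm * T₁).trace - (mpChoi (Wpovm p) * T₁).trace).re
        = p * ((P₁ * T₁).trace).re - p * ((P₀ * T₁).trace).re := by
      rw [hdiff]
      simp [Complex.sub_re, Complex.re_ofReal_mul]
    have hre' : ((mpChoi Zpovm * T₁).trace).re - ((mpChoi (Wpovm p) * T₁).trace).re
        = p * ((P₁ * T₁).trace).re - p * ((P₀ * T₁).trace).re := by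
      rw [← hre]; simp [Complex.sub_re]
    have hineq : p * ((P₁ * T₁).trace).re - p * ((P₀ * T₁).trace).re ≤ p := by
      nlinarith
    simp only [Complex.sub_re, Complex.one_re]
    linarith
  · positivity

/-! ### The explicit tester for the Lüders discrimination -/

def vJ : Fin 2 → ℂ := fun _ => 1
def vK : Fin 2 → ℂ := ![1, -1]

def Jm : Matrix (Fin 2) (Fin 2) ℂ := Matrix.vecMulVec vJ (star vJ)
def Km : Matrix (Fin 2) (Fin 2) ℂ := Matrix.vecMulVec vK (star vK)

def sigM : Matrix (Fin 2) (Fin 2) ℂ := ((1/2 : ℝ) : ℂ) • Jm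

def E2 : Matrix (Fin 2 × Fin 2) (Fin 2 × Fin 2) ℂ := ((1/2 : ℝ) : ℂ) • (Jm ⊗ₖ outm 0)

def E1 : Matrix (Fin 2 × Fin 2) (Fin 2 × Fin 2) ℂ :=
  ((1/2 : ℝ) : ℂ) • (Km ⊗ₖ outm 0) + (1 : Matrix (Fin 2) (Fin 2) ℂ) ⊗ₖ outm 1

lemma Jm_apply (i j : Fin 2) : Jm i j = 1 := by
  simp [Jm, Matrix.vecMulVec_apply, vJ]

lemma Km_diag (i : Fin 2) : Km i i = 1 := by
  fin_cases i <;> simp [Km, Matrix.vecMulVec_apply, vK]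

lemma sigM_apply (i j : Fin 2) : sigM i j = ((1/2 : ℝ) : ℂ) := by
  simp [sigM, Jm, Matrix.vecMulVec_apply, vJ]

lemma sigM_psd : sigM.PosSemidef := psd_smul' (psd_vecMulVec vJ) (by norm_num)

lemma sigM_trace : sigM.trace = 1 := by
  rw [Matrix.trace_fin_two, sigM_apply, sigM_apply]
  norm_num

lemma E_sum : E1 + E2 = 1 := by
  ext ⟨k,a⟩ ⟨l,b⟩
  simp only [E1, E2, Matrix.add_apply, Matrix.smul_apply, Matrix.kroneckerMap_apply]
  fin_cases k <;> fin_cases a <;> fin_cases l <;> fin_cases b <;>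
    simp [E1, E2, Jm, Km, vJ, vK, Matrix.vecMulVec_apply, Matrix.kroneckerMap_apply,
      outm0, outm1, dg_apply, Matrix.one_apply, Prod.ext_iff] <;> norm_num

lemma E1_psd : E1.PosSemidef :=
  ((psd_smul' (psd_kron (psd_vecMulVec vK) (psd_outm 0)) (by norm_num))).add
    (psd_kron Matrix.PosSemidef.one (psd_outm 1))

lemma E2_psd : E2.PosSemidef :=
  psd_smul' (psd_kron (psd_vecMulVec vJ) (psd_outm 0)) (by norm_num)

lemma tester_L : IsTester (sigM ⊗ₖ E1) (sigM ⊗ₖ E2) := by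
  refine ⟨psd_kron sigM_psd E1_psd, psd_kron sigM_psd E2_psd, sigM, sigM_psd, sigM_trace, ?_⟩
  rw [← Matrix.kronecker_add, E_sum]

lemma valZ : (ludersChoi Zpovm * (sigM ⊗ₖ E1)).trace = (((3:ℝ)/4 : ℝ) : ℂ) := by
  rw [E1, Matrix.kronecker_add, Matrix.kronecker_smul, Matrix.mul_add, Matrix.trace_add,
    Matrix.mul_smul, Matrix.trace_smul, trLZ, trLZ]
  rw [outm0, outm1]
  simp [sigM_apply, Km_diag, dg_apply]
  norm_num

lemma valW {p : ℝ} (hp0 : 0 ≤ p) (hp1 : p ≤ 1) :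
    (ludersChoi (Wpovm p) * (sigM ⊗ₖ E2)).trace
    = (((1 + 2*Real.sqrt p + p)/4 : ℝ) : ℂ) := by
  rw [E2, Matrix.kronecker_smul, Matrix.mul_smul, Matrix.trace_smul, trLW hp0 hp1]
  rw [outm0]
  have hs : (Real.sqrt p : ℂ) * (Real.sqrt p : ℂ) = (p : ℂ) := by
    rw [← Complex.ofReal_mul, Real.mul_self_sqrt hp0]
  simp only [sigM_apply, Jm_apply, dg_apply]
  rw [hs]
  norm_num
  push_cast
  ring

/-! ### Upper bound on the Lüders discrimination set -/

lemma SL_bdd {p : ℝ} (hp0 : 0 ≤ p) (hp1 : p ≤ 1) :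
    ∀ r ∈ {r : ℝ | ∃ T₁ T₂ : Matrix (Fin 2 × Fin 2 × Fin 2) (Fin 2 × Fin 2 × Fin 2) ℂ,
      IsTester T₁ T₂ ∧
      r = (1 / 2) * ((ludersChoi Zpovm * T₁).trace).re +
          (1 / 2) * ((ludersChoi (Wpovm p) * T₂).trace).re}, r ≤ 1 := by
  rintro r ⟨T₁, T₂, ⟨hT1, hT2, σ, hσ, hσtr, hsum⟩, rfl⟩
  have hZpsd : (ludersChoi Zpovm).PosSemidef := psd_luders _ _ _ psqrt_Z0 psqrt_Z1
  have hWpsd : (ludersChoi (Wpovm p)).PosSemidef :=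
    psd_luders _ _ _ (psqrt_W0 hp0) (psqrt_W1 hp1)
  have htrσ : σ 0 0 + σ 1 1 = 1 := by rw [← Matrix.trace_fin_two]; exact hσtr
  have hone : (σ ⊗ₖ (1 : Matrix (Fin 2 × Fin 2) (Fin 2 × Fin 2) ℂ))
      = σ ⊗ₖ ((1 : Matrix (Fin 2) (Fin 2) ℂ) ⊗ₖ (1 : Matrix (Fin 2) (Fin 2) ℂ)) := by
    rw [Matrix.one_kronecker_one]
  have hZσ : (ludersChoi Zpovm * (σ ⊗ₖ (1 : Matrix (Fin 2 × Fin 2) (Fin 2 × Fin 2) ℂ))).trace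
      = 1 := by
    rw [hone, trLZ]
    simp only [Matrix.one_apply_eq]
    linear_combination htrσ
  have hWσ : (ludersChoi (Wpovm p) *
      (σ ⊗ₖ (1 : Matrix (Fin 2 × Fin 2) (Fin 2 × Fin 2) ℂ))).trace = 1 := by
    rw [hone, trLW hp0 hp1]
    have hs : (Real.sqrt p : ℂ) * (Real.sqrt p : ℂ) = (p : ℂ) := by
      rw [← Complex.ofReal_mul, Real.mul_self_sqrt hp0]
    have ht : (Real.sqrt (1-p) : ℂ) * (Real.sqrt (1-p) : ℂ) = ((1-p : ℝ) : ℂ) := by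
      rw [← Complex.ofReal_mul, Real.mul_self_sqrt (by linarith)]
    have h01 : (1 : Matrix (Fin 2) (Fin 2) ℂ) 0 1 = 0 := by simp [Matrix.one_apply]
    have h10 : (1 : Matrix (Fin 2) (Fin 2) ℂ) 1 0 = 0 := by simp [Matrix.one_apply]
    rw [h01, h10, hs, ht]
    simp only [Matrix.one_apply_eq]
    push_cast
    linear_combination htrσ
  have hZ1 : ((ludersChoi Zpovm * T₁).trace).re ≤ 1 := by
    have hgroup : (ludersChoi Zpovm * T₁).trace + (ludersChoi Zpovm * T₂).trace = 1 := by
      rw [← Matrix.trace_add, ← Matrix.mul_add, hsum, hZσ]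
    have h2 : 0 ≤ ((ludersChoi Zpovm * T₂).trace).re :=
      re_nonneg_of_nonneg (trace_mul_nonneg' hZpsd hT2)
    have := congrArg Complex.re hgroup
    simp only [Complex.add_re, Complex.one_re] at this
    linarith
  have hW2' : ((ludersChoi (Wpovm p) * T₂).trace).re ≤ 1 := by
    have hgroup : (ludersChoi (Wpovm p) * T₁).trace + (ludersChoi (Wpovm p) * T₂).trace = 1 := by
      rw [← Matrix.trace_add, ← Matrix.mul_add, hsum, hWσ]
    have h1 : 0 ≤ ((ludersChoi (Wpovm p) * T₁).trace).re :=
      re_nonneg_of_nonneg (trace_mul_nonneg' hWpsd hT1)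
    have := congrArg Complex.re hgroup
    simp only [Complex.add_re, Complex.one_re] at this
    linarith
  linarith

lemma SL_ge {p : ℝ} (hp0 : 0 ≤ p) (hp1 : p ≤ 1) :
    1/2 + Real.sqrt p / 4 + p / 8 ≤ SL p := by
  have hmem : (1 / 2) * ((ludersChoi Zpovm * (sigM ⊗ₖ E1)).trace).re +
      (1 / 2) * ((ludersChoi (Wpovm p) * (sigM ⊗ₖ E2)).trace).re ∈
      {r : ℝ | ∃ T₁ T₂ : Matrix (Fin 2 × Fin 2 × Fin 2) (Fin 2 × Fin 2 × Fin 2) ℂ,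
        IsTester T₁ T₂ ∧
        r = (1 / 2) * ((ludersChoi Zpovm * T₁).trace).re +
            (1 / 2) * ((ludersChoi (Wpovm p) * T₂).trace).re} :=
    ⟨sigM ⊗ₖ E1, sigM ⊗ₖ E2, tester_L, rfl⟩
  have hb : BddAbove {r : ℝ | ∃ T₁ T₂ : Matrix (Fin 2 × Fin 2 × Fin 2) (Fin 2 × Fin 2 × Fin 2) ℂ,
      IsTester T₁ T₂ ∧
      r = (1 / 2) * ((ludersChoi Zpovm * T₁).trace).re +
          (1 / 2) * ((ludersChoi (Wpovm p) * T₂).trace).re} :=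
    ⟨1, fun r hr => SL_bdd hp0 hp1 r hr⟩
  have hle := le_csSup hb hmem
  rw [valZ, valW hp0 hp1] at hle
  simp only [Complex.ofReal_re] at hle
  unfold SL
  linarith

theorem stmt7 : ∀ L : ℝ, 0 < L → ∃ p : ℝ, 0 < p ∧ p < 1 ∧
    SL p - 1 / 2 > L * (SM p - 1 / 2) := by
  intro L hL
  set q : ℝ := min (1/2) (1/(2*L+2)) with hq
  have hq0 : 0 < q := lt_min (by norm_num) (by positivity)
  have hqh : q ≤ 1/2 := min_le_left _ _
  have hqL : q ≤ 1/(2*L+2) := min_le_right _ _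
  refine ⟨q^2, by positivity, ?_, ?_⟩
  · nlinarith
  · have hp0 : 0 ≤ q^2 := by positivity
    have hp1 : q^2 ≤ 1 := by nlinarith
    have hsq : Real.sqrt (q^2) = q := Real.sqrt_sq hq0.le
    have h1 := SL_ge hp0 hp1
    rw [hsq] at h1
    have h2 := SM_le hp0 hp1
    have hkey : L * (q^2/2) < q/4 := by
      have hLq : L * q ≤ L * (1/(2*L+2)) := by nlinarith
      have h2L : (0:ℝ) < 2*L+2 := by linarith
      have : L * (1/(2*L+2)) < 1/2 := by
        rw [mul_one_div, div_lt_iff₀ h2L]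
        nlinarith
      nlinarith
    have hSM : L * (SM (q^2) - 1/2) ≤ L * (q^2/2) := by nlinarith
    nlinarith
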